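/- Let T ∈ ℕ, ε > 0. Let d : ℝ^p → ℝ be a differentiable convex function with Bregman distance ξ(x,y) := d(y) − d(x) − ⟨∇d(x), y − x⟩, with x_0 a minimizer of d. Let h : ℝ^p → ℝ be convex and for each t = 0,…,T let g_t : ℝ^p → ℝ be convex and differentiable. Let L_1,…,L_{T+1} > 0 and define φ_0(x) := ξ(x_0, x) and φ_{t+1}(x) := φ_t(x) + (1/(2L_{t+1}))·[g_t(x_t) + ⟨∇g_t(x_t), x − x_t⟩ + h(x)], where for each t the point x_{t+1} is a minimizer of φ_{t+1}. Suppose for each t = 0,…,T there is a point y_t with g_t(y_t) + h(y_t) ≤ (inf over x of [g_t(x_t) + ⟨∇g_t(x_t), x − x_t⟩ + 2L_{t+1}·ξ(x_t, x) + h(x)]) + ε/2. Then for every y ∈ ℝ^p, ∑_{t=0}^{T} (1/(2L_{t+1}))·[(g_t(y_t) + h(y_t)) − (g_t(y) + h(y))] ≤ (ε/4)·∑_{t=0}^{T} (1/L_{t+1}) + ξ(x_0, y). -/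

import Mathlib

/-!
With weights `aₜ = 1/(2Lₜ₊₁)` the estimate functions are sandwiched. From above, convexity of `gₜ`
puts each linear model below `gₜ + h`, so `φ_{T+1}(z) ≤ ξ(x₀, z) + ∑ aₜ (gₜ + h)(z)`. From below,
`φₜ − d` is convex, so the minimizer `xₜ` of `φₜ` satisfies the three-point inequality
`φₜ(xₜ) + ξ(xₜ, z) ≤ φₜ(z)`; combined with the acceptance condition for `yₜ` this telescopes to
`∑ aₜ ((gₜ + h)(yₜ) − ε/2) + ξ(x_{T+1}, z) ≤ φ_{T+1}(z)`. As `ξ ≥ 0`, the two bounds give the claim.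
-/

open scoped InnerProductSpace
open Filter Set Topology

variable {E : Type*} [NormedAddCommGroup E] [InnerProductSpace ℝ E]

theorem convexOn_const_add_inner_sub (c : ℝ) (v x : E) :
    ConvexOn ℝ univ (fun y => c + ⟪v, y - x⟫_ℝ) := by
  have haffine : (fun y => c + ⟪v, y - x⟫_ℝ) = fun y => innerSL ℝ v y + (c - ⟪v, x⟫_ℝ) := by
    ext y
    rw [innerSL_apply_apply, inner_sub_right]
    ring
  rw [haffine]
  exact ((innerSL ℝ v).toLinearMap.convexOn convex_univ).add (convexOn_const _ convex_univ)

variable [CompleteSpace E]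

theorem ConvexOn.le_add_inner_gradient_of_isMinOn_add {d ψ : E → ℝ} {a : E}
    (hψ : ConvexOn ℝ univ ψ) (hd : DifferentiableAt ℝ d a) (hmin : IsMinOn (d + ψ) univ a)
    (z : E) : ψ a ≤ ψ z + ⟪gradient d a, z - a⟫_ℝ := by
  have hslope := (hd.hasFDerivAt.hasLineDerivAt (z - a)).tendsto_slope_zero_right
  rw [← inner_gradient_left] at hslope
  have hev : ∀ᶠ t in 𝓝[>] (0 : ℝ), ψ a - ψ z ≤ t⁻¹ • (d (a + t • (z - a)) - d a) := by
    filter_upwards [Ioc_mem_nhdsGT zero_lt_one] with t ⟨ht0, ht1⟩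
    have hψt : ψ (a + t • (z - a)) ≤ (1 - t) * ψ a + t * ψ z := by
      rw [show a + t • (z - a) = (1 - t) • a + t • z by module]
      exact hψ.2 (mem_univ a) (mem_univ z) (sub_nonneg.2 ht1) ht0.le (sub_add_cancel 1 t)
    have hmin_t : d a + ψ a ≤ d (a + t • (z - a)) + ψ (a + t • (z - a)) :=
      hmin (mem_univ _)
    rw [smul_eq_mul, le_inv_mul_iff₀ ht0]
    nlinarith
  linarith [ge_of_tendsto hslope hev]

theorem ConvexOn.add_inner_gradient_le {f : E → ℝ} {a : E} (hf : ConvexOn ℝ univ f)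
    (hfa : DifferentiableAt ℝ f a) (z : E) : f a + ⟪gradient f a, z - a⟫_ℝ ≤ f z := by
  -- `-f + f = 0` is minimized at every point.
  have := hf.le_add_inner_gradient_of_isMinOn_add hfa.neg (fun w _ => by simp) z
  simp only [inner_gradient_left, fderiv_neg, neg_apply] at this ⊢
  linarith

noncomputable def bregman (d : E → ℝ) (x y : E) : ℝ := d y - d x - ⟪gradient d x, y - x⟫_ℝ

theorem bregman_nonneg {d : E → ℝ} {x : E} (hd : ConvexOn ℝ univ d)
    (hdx : DifferentiableAt ℝ d x) (y : E) : 0 ≤ bregman d x y := by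
  have := hd.add_inner_gradient_le hdx y
  unfold bregman
  linarith

theorem convexOn_bregman_sub (d : E → ℝ) (x : E) :
    ConvexOn ℝ univ (fun y => bregman d x y - d y) := by
  convert convexOn_const_add_inner_sub (-d x) (-gradient d x) x using 2 with y
  rw [bregman, inner_neg_left]
  ring

theorem add_bregman_le_of_isMinOn {d φ : E → ℝ} {x : E} (hdx : DifferentiableAt ℝ d x)
    (hφd : ConvexOn ℝ univ (fun y => φ y - d y)) (hmin : IsMinOn φ univ x) (y : E) :
    φ x + bregman d x y ≤ φ y := by
  have hmin' : IsMinOn (d + fun y => φ y - d y) univ x := by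
    simpa only [Pi.add_def, add_sub_cancel] using hmin
  have := hφd.le_add_inner_gradient_of_isMinOn_add hdx hmin' y
  unfold bregman
  linarith

section EstimateSequence

variable {d : E → ℝ} {φ ℓ : ℕ → E → ℝ} {a : ℕ → ℝ} {x : ℕ → E} {n : ℕ}

theorem convexOn_estimate_sub (hφ0 : ∀ y, φ 0 y = bregman d (x 0) y)
    (hφsucc : ∀ t < n, ∀ y, φ (t + 1) y = φ t y + a t * ℓ t y)
    (ha : ∀ t < n, 0 ≤ a t) (hℓ : ∀ t < n, ConvexOn ℝ univ (ℓ t)) {m : ℕ} (hm : m ≤ n) :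
    ConvexOn ℝ univ (fun y => φ m y - d y) := by
  induction m with
  | zero => simpa only [hφ0] using convexOn_bregman_sub d (x 0)
  | succ m ih =>
    have hsplit : (fun y => φ (m + 1) y - d y) = (fun y => φ m y - d y) + a m • ℓ m := by
      ext y
      simp only [hφsucc m hm y, Pi.add_apply, Pi.smul_apply, smul_eq_mul]
      ring
    rw [hsplit]
    exact (ih (by omega)).add ((hℓ m hm).smul (ha m hm))

theorem estimate_le_bregman_add_sum {F : ℕ → E → ℝ} (hφ0 : ∀ y, φ 0 y = bregman d (x 0) y)
    (hφsucc : ∀ t < n, ∀ y, φ (t + 1) y = φ t y + a t * ℓ t y)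
    (ha : ∀ t < n, 0 ≤ a t) (hℓF : ∀ t < n, ∀ y, ℓ t y ≤ F t y) {m : ℕ} (hm : m ≤ n) (y : E) :
    φ m y ≤ bregman d (x 0) y + ∑ t ∈ Finset.range m, a t * F t y := by
  induction m with
  | zero => simp [hφ0]
  | succ m ih =>
    rw [hφsucc m hm y, Finset.sum_range_succ]
    linarith [ih (by omega), mul_le_mul_of_nonneg_left (hℓF m hm y) (ha m hm)]

theorem sum_add_bregman_le_estimate {r : ℕ → ℝ} (hd : Differentiable ℝ d)
    (hφ0 : ∀ y, φ 0 y = bregman d (x 0) y)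
    (hφsucc : ∀ t < n, ∀ y, φ (t + 1) y = φ t y + a t * ℓ t y)
    (hφd : ∀ t ≤ n, ConvexOn ℝ univ (fun y => φ t y - d y))
    (hmin : ∀ t < n, IsMinOn (φ (t + 1)) univ (x (t + 1)))
    (hr : ∀ t < n, r t ≤ a t * ℓ t (x (t + 1)) + bregman d (x t) (x (t + 1)))
    {m : ℕ} (hm : m ≤ n) (y : E) :
    ∑ t ∈ Finset.range m, r t + bregman d (x m) y ≤ φ m y := by
  induction m generalizing y with
  | zero => simp [hφ0]
  | succ m ih =>
    have hprev := ih (by omega) (x (m + 1))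
    have hnext := add_bregman_le_of_isMinOn (hd _) (hφd _ hm) (hmin m hm) y
    rw [Finset.sum_range_succ]
    linarith [hφsucc m hm (x (m + 1)), hr m hm]

theorem sum_sub_le_bregman {F : ℕ → E → ℝ} {r : ℕ → ℝ} (hdconv : ConvexOn ℝ univ d)
    (hd : Differentiable ℝ d) (hφ0 : ∀ y, φ 0 y = bregman d (x 0) y)
    (hφsucc : ∀ t < n, ∀ y, φ (t + 1) y = φ t y + a t * ℓ t y)
    (ha : ∀ t < n, 0 ≤ a t) (hℓ : ∀ t < n, ConvexOn ℝ univ (ℓ t))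
    (hℓF : ∀ t < n, ∀ y, ℓ t y ≤ F t y)
    (hmin : ∀ t < n, IsMinOn (φ (t + 1)) univ (x (t + 1)))
    (hr : ∀ t < n, r t ≤ a t * ℓ t (x (t + 1)) + bregman d (x t) (x (t + 1))) (z : E) :
    ∑ t ∈ Finset.range n, (r t - a t * F t z) ≤ bregman d (x 0) z := by
  have hlower := sum_add_bregman_le_estimate hd hφ0 hφsucc
    (fun t ht => convexOn_estimate_sub hφ0 hφsucc ha hℓ ht) hmin hr le_rfl z
  have hupper := estimate_le_bregman_add_sum hφ0 hφsucc ha hℓF le_rfl z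
  rw [Finset.sum_sub_distrib]
  linarith [bregman_nonneg hdconv (hd (x n)) z]

end EstimateSequence

theorem one_div_two_mul_sub_le_of_le {L ε u v w : ℝ} (hL : 0 < L)
    (huv : u ≤ v + 2 * L * w + ε / 2) :
    1 / (2 * L) * (u - ε / 2) ≤ 1 / (2 * L) * v + w :=
  calc 1 / (2 * L) * (u - ε / 2) ≤ 1 / (2 * L) * (v + 2 * L * w) :=
        mul_le_mul_of_nonneg_left (by linarith) (by positivity)
    _ = 1 / (2 * L) * v + w := by field_simp

theorem statement11_general {p : ℕ} (T : ℕ) (ε : ℝ)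
    (d : EuclideanSpace ℝ (Fin p) → ℝ) (hd : Differentiable ℝ d)
    (hdconv : ConvexOn ℝ Set.univ d)
    (xi : EuclideanSpace ℝ (Fin p) → EuclideanSpace ℝ (Fin p) → ℝ)
    (hxi : ∀ x y : EuclideanSpace ℝ (Fin p), xi x y = d y - d x - ⟪gradient d x, y - x⟫_ℝ)
    (h : EuclideanSpace ℝ (Fin p) → ℝ) (hh : ConvexOn ℝ Set.univ h)
    (g : ℕ → EuclideanSpace ℝ (Fin p) → ℝ)
    (hgconv : ∀ t ≤ T, ConvexOn ℝ Set.univ (g t))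
    (hgdiff : ∀ t ≤ T, Differentiable ℝ (g t))
    (L : ℕ → ℝ) (hL : ∀ t ≤ T, 0 < L (t + 1))
    (x : ℕ → EuclideanSpace ℝ (Fin p))
    (φ : ℕ → EuclideanSpace ℝ (Fin p) → ℝ)
    (hφ0 : ∀ z : EuclideanSpace ℝ (Fin p), φ 0 z = xi (x 0) z)
    (hφsucc : ∀ t ≤ T, ∀ z : EuclideanSpace ℝ (Fin p),
      φ (t + 1) z = φ t z
        + 1 / (2 * L (t + 1)) * (g t (x t) + ⟪gradient (g t) (x t), z - x t⟫_ℝ + h z))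
    (hxmin : ∀ t ≤ T, ∀ z : EuclideanSpace ℝ (Fin p), φ (t + 1) (x (t + 1)) ≤ φ (t + 1) z)
    (y : ℕ → EuclideanSpace ℝ (Fin p))
    (hy : ∀ t ≤ T, ∀ z : EuclideanSpace ℝ (Fin p),
      g t (y t) + h (y t) ≤ g t (x t) + ⟪gradient (g t) (x t), z - x t⟫_ℝ
        + 2 * L (t + 1) * xi (x t) z + h z + ε / 2) :
    ∀ z : EuclideanSpace ℝ (Fin p),
      ∑ t ∈ Finset.range (T + 1),
          1 / (2 * L (t + 1)) * ((g t (y t) + h (y t)) - (g t z + h z))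
        ≤ ε / 4 * ∑ t ∈ Finset.range (T + 1), 1 / L (t + 1) + xi (x 0) z := by
  intro z
  obtain rfl : xi = bregman d := funext fun u => funext fun v => hxi u v
  have hregret := sum_sub_le_bregman (n := T + 1)
    (ℓ := fun t w => g t (x t) + ⟪gradient (g t) (x t), w - x t⟫_ℝ + h w)
    (F := fun t w => g t w + h w)
    (r := fun t => 1 / (2 * L (t + 1)) * (g t (y t) + h (y t) - ε / 2)) hdconv hd hφ0
    (fun t ht => hφsucc t (by omega))
    (fun t ht => by have := hL t (by omega); positivity)
    (fun t _ => (convexOn_const_add_inner_sub _ _ _).add hh)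
    (fun t ht w => by
      linarith [(hgconv t (by omega)).add_inner_gradient_le (hgdiff t (by omega) (x t)) w])
    (fun t ht w _ => hxmin t (by omega) w)
    (fun t ht => one_div_two_mul_sub_le_of_le (hL t (by omega))
      (by linarith [hy t (by omega) (x (t + 1))])) z
  calc ∑ t ∈ Finset.range (T + 1),
        1 / (2 * L (t + 1)) * ((g t (y t) + h (y t)) - (g t z + h z))
    _ = ∑ t ∈ Finset.range (T + 1), (1 / (2 * L (t + 1)) * (g t (y t) + h (y t) - ε / 2)
          - 1 / (2 * L (t + 1)) * (g t z + h z))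
        + ε / 4 * ∑ t ∈ Finset.range (T + 1), 1 / L (t + 1) := by
      rw [Finset.mul_sum, ← Finset.sum_add_distrib]
      exact Finset.sum_congr rfl fun t _ => by ring
    _ ≤ ε / 4 * ∑ t ∈ Finset.range (T + 1), 1 / L (t + 1) + bregman d (x 0) z := by
      linarith

/-- Regret bound of the generic O-UDGM. With `d` differentiable convex having Bregman
distance `ξ(x,y) = d(y) − d(x) − ⟨∇d(x), y − x⟩`, `x 0` a minimizer of `d`, `h` convex,
each `g t` convex differentiable, estimate functions
`φ_0(x) = ξ(x_0, x)`, `φ_{t+1}(x) = φ_t(x) + (1/(2L_{t+1}))[g_t(x_t) + ⟨∇g_t(x_t), x − x_t⟩ + h(x)]`,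
`x (t+1)` a minimizer of `φ_{t+1}`, and `y t` satisfying
`g_t(y_t) + h(y_t) ≤ inf_x [g_t(x_t) + ⟨∇g_t(x_t), x − x_t⟩ + 2L_{t+1}ξ(x_t, x) + h(x)] + ε/2`,
we have for every `y`:
`∑_{t=0}^{T} (1/(2L_{t+1}))[(g_t(y_t) + h(y_t)) − (g_t(y) + h(y))]
  ≤ (ε/4)∑_{t=0}^{T} (1/L_{t+1}) + ξ(x_0, y)`. -/
theorem statement11 {p : ℕ} (T : ℕ) (ε : ℝ) (hε : 0 < ε)
    (d : EuclideanSpace ℝ (Fin p) → ℝ) (hd : Differentiable ℝ d)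
    (hdconv : ConvexOn ℝ Set.univ d)
    (xi : EuclideanSpace ℝ (Fin p) → EuclideanSpace ℝ (Fin p) → ℝ)
    (hxi : ∀ x y : EuclideanSpace ℝ (Fin p), xi x y = d y - d x - ⟪gradient d x, y - x⟫_ℝ)
    (h : EuclideanSpace ℝ (Fin p) → ℝ) (hh : ConvexOn ℝ Set.univ h)
    (g : ℕ → EuclideanSpace ℝ (Fin p) → ℝ)
    (hgconv : ∀ t ≤ T, ConvexOn ℝ Set.univ (g t))
    (hgdiff : ∀ t ≤ T, Differentiable ℝ (g t))
    (L : ℕ → ℝ) (hL : ∀ t ≤ T, 0 < L (t + 1))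
    (x : ℕ → EuclideanSpace ℝ (Fin p))
    (hx0 : ∀ z : EuclideanSpace ℝ (Fin p), d (x 0) ≤ d z)
    (φ : ℕ → EuclideanSpace ℝ (Fin p) → ℝ)
    (hφ0 : ∀ z : EuclideanSpace ℝ (Fin p), φ 0 z = xi (x 0) z)
    (hφsucc : ∀ t ≤ T, ∀ z : EuclideanSpace ℝ (Fin p),
      φ (t + 1) z = φ t z
        + 1 / (2 * L (t + 1)) * (g t (x t) + ⟪gradient (g t) (x t), z - x t⟫_ℝ + h z))
    (hxmin : ∀ t ≤ T, ∀ z : EuclideanSpace ℝ (Fin p), φ (t + 1) (x (t + 1)) ≤ φ (t + 1) z)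
    (y : ℕ → EuclideanSpace ℝ (Fin p))
    (hy : ∀ t ≤ T, ∀ z : EuclideanSpace ℝ (Fin p),
      g t (y t) + h (y t) ≤ g t (x t) + ⟪gradient (g t) (x t), z - x t⟫_ℝ
        + 2 * L (t + 1) * xi (x t) z + h z + ε / 2) :
    ∀ z : EuclideanSpace ℝ (Fin p),
      ∑ t ∈ Finset.range (T + 1),
          1 / (2 * L (t + 1)) * ((g t (y t) + h (y t)) - (g t z + h z))
        ≤ ε / 4 * ∑ t ∈ Finset.range (T + 1), 1 / L (t + 1) + xi (x 0) z :=
  statement11_general T ε d hd hdconv xi hxi h hh g hgconv hgdiff L hL x φ hφ0 hφsucc hxmin y hy
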